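/- If X is a nonempty set of vertices of the n-dimensional hypercube Q_n (n ≥ 1) such that every vertex of X has at least h neighbors inside X, where 0 ≤ h ≤ n−1, then |X| + |N(X)| ≥ 2^h·(n−h), where N(X) is the set of vertices outside X having a neighbor in X. -/

import Mathlib

/-!
Split `Q_n` along the first coordinate into two copies of `Q_{n-1}` and induct on `n`.
If `X` meets both halves, each half of `X` has minimum degree at least `h - 1` (a vertex has
only one neighbour across), and the boundaries of the two halves are disjoint parts of `N(X)`;
this gives `2 · 2^(h-1) (n - h)`. If `X` lies in one half `Y`, then `Y` keeps minimum
degree `h` and the mirror image of `Y` in the other half lies in `N(X)`, so the induction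
hypothesis and `|Y| ≥ 2^h` give `2^h (n - 1 - h) + 2^h`. The bound `|Y| ≥ 2^h` is proved by
the same splitting.
-/

/-- The hypercube graph on `Fin n → Bool`: adjacency = Hamming distance 1. -/
def Qn (n : ℕ) : SimpleGraph (Fin n → Bool) where
  Adj x y := (Finset.univ.filter fun i => x i ≠ y i).card = 1
  symm := by
    constructor
    intro x y h
    convert h using 2
    ext i
    simp [ne_comm]
  loopless := by
    constructor
    intro x h
    simp at h

/-- Bitwise complement. -/
def bcomp (n : ℕ) (x : Fin n → Bool) : Fin n → Bool := fun i => !(x i)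

/-- Crossing-edge adjacency in HCN_n. -/
def CAdj (n : ℕ) (u v : (Fin n → Bool) × (Fin n → Bool)) : Prop :=
  (u.1 ≠ u.2 ∧ v = (u.2, u.1)) ∨
  (u.1 = u.2 ∧ v = (bcomp n u.1, bcomp n u.1)) ∨
  (v.1 ≠ v.2 ∧ u = (v.2, v.1)) ∨
  (v.1 = v.2 ∧ u = (bcomp n v.1, bcomp n v.1))

/-- The hierarchical cubic network HCN_n. -/
def HCN (n : ℕ) : SimpleGraph ((Fin n → Bool) × (Fin n → Bool)) where
  Adj u v := u ≠ v ∧ ((u.1 = v.1 ∧ (Qn n).Adj u.2 v.2) ∨ CAdj n u v)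
  symm := by
    constructor
    rintro u v ⟨hne, h⟩
    refine ⟨hne.symm, ?_⟩
    rcases h with ⟨h1, h2⟩ | h | h | h | h
    · exact Or.inl ⟨h1.symm, h2.symm⟩
    · exact Or.inr (Or.inr (Or.inr (Or.inl h)))
    · exact Or.inr (Or.inr (Or.inr (Or.inr h)))
    · exact Or.inr (Or.inl h)
    · exact Or.inr (Or.inr (Or.inl h))
  loopless := by constructor; intro u h; exact h.1 rfl

theorem hammingDist_cons {β : Type*} [DecidableEq β] {m : ℕ} (a c : β) (z w : Fin m → β) :
    hammingDist (Fin.cons a z : Fin (m + 1) → β) (Fin.cons c w) =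
      (if a = c then 0 else 1) + hammingDist z w := by
  rw [hammingDist, Fin.card_filter_univ_succ']
  by_cases h : a = c <;> simp [h, hammingDist]

namespace Qn

open Finset
open scoped Classical

variable {m n : ℕ}

theorem adj_iff_hammingDist {x y : Fin n → Bool} : (Qn n).Adj x y ↔ hammingDist x y = 1 :=
  Iff.rfl

theorem adj_cons_cons_iff {a c : Bool} {z w : Fin m → Bool} :
    (Qn (m + 1)).Adj (Fin.cons a z) (Fin.cons c w) ↔
      (c = a ∧ (Qn m).Adj z w) ∨ (c = !a ∧ z = w) := by
  rw [adj_iff_hammingDist, adj_iff_hammingDist, hammingDist_cons]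
  cases a <;> cases c <;> simp

def consEmb (b : Bool) : (Fin m → Bool) ↪ (Fin (m + 1) → Bool) :=
  ⟨fun z => Fin.cons b z, Fin.cons_right_injective (α := fun _ => Bool) b⟩

@[simp] theorem consEmb_apply (b : Bool) (z : Fin m → Bool) : consEmb b z = Fin.cons b z := rfl

noncomputable def vertexBoundary (X : Finset (Fin n → Bool)) : Finset (Fin n → Bool) :=
  univ.filter fun y => y ∉ X ∧ ∃ x ∈ X, (Qn n).Adj x y

@[simp] theorem mem_vertexBoundary {X : Finset (Fin n → Bool)} {y : Fin n → Bool} :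
    y ∈ vertexBoundary X ↔ y ∉ X ∧ ∃ x ∈ X, (Qn n).Adj x y := by
  simp [vertexBoundary]

def MinDegreeAtLeast (h : ℕ) (X : Finset (Fin n → Bool)) : Prop :=
  ∀ x ∈ X, h ≤ #(X.filter fun y => (Qn n).Adj x y)

def slice (b : Bool) (X : Finset (Fin (m + 1) → Bool)) : Finset (Fin m → Bool) :=
  univ.filter fun z => Fin.cons b z ∈ X

@[simp] theorem mem_slice {b : Bool} {X : Finset (Fin (m + 1) → Bool)} {z : Fin m → Bool} :
    z ∈ slice b X ↔ Fin.cons b z ∈ X := by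
  simp [slice]

theorem card_add_card_le_of_map_consEmb_subset {b : Bool} {S T : Finset (Fin m → Bool)}
    {U : Finset (Fin (m + 1) → Bool)} (hS : S.map (consEmb b) ⊆ U)
    (hT : T.map (consEmb (!b)) ⊆ U) : #S + #T ≤ #U := by
  have hdisj : Disjoint (S.map (consEmb b)) (T.map (consEmb (!b))) := by
    simp only [disjoint_left, mem_map, consEmb_apply, not_exists, not_and]
    rintro _ ⟨z, -, rfl⟩ w - hwz
    cases b <;> simpa using congrFun hwz 0
  calc #S + #T = #(S.map (consEmb b) ∪ T.map (consEmb (!b))) := by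
        rw [card_union_of_disjoint hdisj, card_map, card_map]
    _ ≤ #U := card_le_card (union_subset hS hT)

theorem map_consEmb_slice_subset (b : Bool) (X : Finset (Fin (m + 1) → Bool)) :
    (slice b X).map (consEmb b) ⊆ X := by
  simp [subset_iff]

theorem card_slice_le (b : Bool) (X : Finset (Fin (m + 1) → Bool)) : #(slice b X) ≤ #X := by
  simpa using card_le_card (map_consEmb_slice_subset b X)

theorem map_consEmb_vertexBoundary_slice_subset (b : Bool) (X : Finset (Fin (m + 1) → Bool)) :
    (vertexBoundary (slice b X)).map (consEmb b) ⊆ vertexBoundary X := by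
  simp only [subset_iff, mem_map, mem_vertexBoundary, mem_slice, consEmb_apply]
  rintro _ ⟨z, ⟨hz, x, hx, hxz⟩, rfl⟩
  exact ⟨hz, _, hx, adj_cons_cons_iff.2 (Or.inl ⟨rfl, hxz⟩)⟩

theorem map_consEmb_slice_subset_vertexBoundary {b : Bool} {X : Finset (Fin (m + 1) → Bool)}
    (hempty : slice (!b) X = ∅) : (slice b X).map (consEmb (!b)) ⊆ vertexBoundary X := by
  simp only [subset_iff, mem_map, mem_vertexBoundary, consEmb_apply]
  rintro _ ⟨z, hz, rfl⟩
  refine ⟨fun h => ?_, _, mem_slice.1 hz, adj_cons_cons_iff.2 (Or.inr ⟨rfl, rfl⟩)⟩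
  simpa [hempty] using mem_slice.2 h

theorem filter_adj_cons_subset (b : Bool) (X : Finset (Fin (m + 1) → Bool)) (z : Fin m → Bool) :
    X.filter (fun y => (Qn (m + 1)).Adj (Fin.cons b z) y) ⊆
      ((slice b X).filter fun w => (Qn m).Adj z w).map (consEmb b) ∪
        X.filter (· = Fin.cons (!b) z) := by
  intro y hy
  cases y using Fin.consCases with
  | cons c w =>
    simp only [mem_filter, adj_cons_cons_iff] at hy
    rcases hy with ⟨hy, ⟨rfl, hzw⟩ | ⟨rfl, rfl⟩⟩
    · exact mem_union_left _ (mem_map_of_mem _ (mem_filter.2 ⟨mem_slice.2 hy, hzw⟩))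
    · exact mem_union_right _ (mem_filter.2 ⟨hy, rfl⟩)

theorem card_filter_adj_cons_le (b : Bool) (X : Finset (Fin (m + 1) → Bool))
    (z : Fin m → Bool) :
    #(X.filter fun y => (Qn (m + 1)).Adj (Fin.cons b z) y) ≤
      #((slice b X).filter fun w => (Qn m).Adj z w) + 1 := by
  refine (card_le_card (filter_adj_cons_subset b X z)).trans ((card_union_le _ _).trans ?_)
  rw [card_map, filter_eq']
  split_ifs <;> simp

theorem card_filter_adj_cons_le_of_slice_eq_empty {b : Bool} {X : Finset (Fin (m + 1) → Bool)}
    (hempty : slice (!b) X = ∅) (z : Fin m → Bool) :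
    #(X.filter fun y => (Qn (m + 1)).Adj (Fin.cons b z) y) ≤
      #((slice b X).filter fun w => (Qn m).Adj z w) := by
  have hz : Fin.cons (!b) z ∉ X := fun h => by simpa [hempty] using mem_slice.2 h
  simpa [filter_eq', hz] using card_le_card (filter_adj_cons_subset b X z)

theorem MinDegreeAtLeast.exists_slice {h : ℕ} {X : Finset (Fin (m + 1) → Bool)}
    (hX : X.Nonempty) (hdeg : MinDegreeAtLeast h X) :
    ∃ b, (slice b X).Nonempty ∧
      (slice (!b) X = ∅ ∧ MinDegreeAtLeast h (slice b X) ∨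
        (slice (!b) X).Nonempty ∧ MinDegreeAtLeast (h - 1) (slice b X) ∧
          MinDegreeAtLeast (h - 1) (slice (!b) X)) := by
  obtain ⟨x, hx⟩ := hX
  refine ⟨x 0, ⟨Fin.tail x, by simpa⟩, ?_⟩
  have hslice (c : Bool) : MinDegreeAtLeast (h - 1) (slice c X) := fun z hz =>
    Nat.sub_le_of_le_add ((hdeg _ (mem_slice.1 hz)).trans (card_filter_adj_cons_le c X z))
  rcases (slice (!x 0) X).eq_empty_or_nonempty with hempty | hne
  · exact Or.inl ⟨hempty, fun z hz =>
      (hdeg _ (mem_slice.1 hz)).trans (card_filter_adj_cons_le_of_slice_eq_empty hempty z)⟩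
  · exact Or.inr ⟨hne, hslice _, hslice _⟩

theorem MinDegreeAtLeast.two_pow_le_card {h : ℕ} {X : Finset (Fin n → Bool)}
    (hX : X.Nonempty) (hdeg : MinDegreeAtLeast h X) : 2 ^ h ≤ #X := by
  induction n generalizing h with
  | zero =>
    obtain ⟨x, hx⟩ := hX
    have hh : h = 0 := by
      have hnone : X.filter (fun y => (Qn 0).Adj x y) = ∅ :=
        filter_eq_empty_iff.2 fun y _ hy => hy.ne (Subsingleton.elim _ _)
      simpa [hnone] using hdeg x hx
    simpa [hh] using card_pos.2 ⟨x, hx⟩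
  | succ m ih =>
    obtain ⟨b, hY, ⟨-, hdegY⟩ | ⟨hZ, hdegY, hdegZ⟩⟩ := hdeg.exists_slice hX
    · exact (ih hY hdegY).trans (card_slice_le b X)
    · calc 2 ^ h ≤ 2 ^ (h - 1) + 2 ^ (h - 1) := by
            rcases h with _ | h
            · simp
            · simp [pow_succ, mul_two]
        _ ≤ #(slice b X) + #(slice (!b) X) := add_le_add (ih hY hdegY) (ih hZ hdegZ)
        _ ≤ #X := card_add_card_le_of_map_consEmb_subset
            (map_consEmb_slice_subset b X) (map_consEmb_slice_subset (!b) X)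

theorem MinDegreeAtLeast.two_pow_mul_le_card_add_card_vertexBoundary {h : ℕ}
    {X : Finset (Fin n → Bool)} (hX : X.Nonempty) (hdeg : MinDegreeAtLeast h X) :
    2 ^ h * (n - h) ≤ #X + #(vertexBoundary X) := by
  induction n generalizing h with
  | zero => simp
  | succ m ih =>
    obtain ⟨b, hY, ⟨hempty, hdegY⟩ | ⟨hZ, hdegY, hdegZ⟩⟩ := hdeg.exists_slice hX
    · have hYX := card_slice_le b X
      have hYN := card_add_card_le_of_map_consEmb_subset
        (map_consEmb_vertexBoundary_slice_subset b X)
        (map_consEmb_slice_subset_vertexBoundary hempty)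
      calc 2 ^ h * (m + 1 - h) ≤ 2 ^ h * (m - h) + 2 ^ h := by
            rw [← Nat.mul_succ]; gcongr; omega
        _ ≤ #(slice b X) + #(vertexBoundary (slice b X)) + #(slice b X) :=
            add_le_add (ih hY hdegY) (hdegY.two_pow_le_card hY)
        _ ≤ #X + #(vertexBoundary X) := by omega
    · have hXYZ := card_add_card_le_of_map_consEmb_subset
        (map_consEmb_slice_subset b X) (map_consEmb_slice_subset (!b) X)
      have hNYZ := card_add_card_le_of_map_consEmb_subset
        (map_consEmb_vertexBoundary_slice_subset b X)
        (map_consEmb_vertexBoundary_slice_subset (!b) X)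
      have hYN := ih hY hdegY
      have hZN := ih hZ hdegZ
      have hZpos := hZ.card_pos
      -- for `h = 0` the two halves give only `2 (n - 1)`; the vertex of the second half adds one
      rcases h with _ | h
      · simp only [pow_zero, one_mul, Nat.sub_zero] at hYN hZN ⊢
        omega
      · rw [pow_succ, Nat.add_sub_add_right]
        simp only [Nat.add_sub_cancel] at hYN hZN
        nlinarith

end Qn

open scoped Classical in
theorem stmt1_general (n h : ℕ)
    (X : Finset (Fin n → Bool)) (hX : X.Nonempty)
    (hdeg : ∀ x ∈ X, h ≤ (X.filter (fun y => (Qn n).Adj x y)).card) :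
    2 ^ h * (n - h) ≤
      X.card + (Finset.univ.filter
        (fun y => y ∉ X ∧ ∃ x ∈ X, (Qn n).Adj x y)).card :=
  Qn.MinDegreeAtLeast.two_pow_mul_le_card_add_card_vertexBoundary hX hdeg

open scoped Classical in
/-- If every vertex of a nonempty X ⊆ Q_n has at least h neighbors in X (0 ≤ h ≤ n-1),
then |X| + |N(X)| ≥ 2^h (n - h). -/
theorem stmt1 (n h : ℕ) (hn : 1 ≤ n) (hh : h ≤ n - 1)
    (X : Finset (Fin n → Bool)) (hX : X.Nonempty)
    (hdeg : ∀ x ∈ X, h ≤ (X.filter (fun y => (Qn n).Adj x y)).card) :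
    2 ^ h * (n - h) ≤
      X.card + (Finset.univ.filter
        (fun y => y ∉ X ∧ ∃ x ∈ X, (Qn n).Adj x y)).card :=
  stmt1_general n h X hX hdeg
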